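/- arXiv:0809.4974 — 5 statements merged into one kernel-verified Lean document; each statement's English description precedes it below -/
import Mathlib

section
/- For real θ with θ ≠ 0 and θ ≠ 2, the function M_θ(x,y) = (((2-θ)/2) · (x-y)/(x^((2-θ)/2) - y^((2-θ)/2)))^(2/θ), defined for positive reals x ≠ y, satisfies the mean property: min(x,y) ≤ M_θ(x,y) ≤ max(x,y) for all x, y > 0 with x ≠ y. -/
noncomputable def stolarskyMean (θ x y : ℝ) : ℝ :=
  (((2 - θ) / 2) * (x - y) / (x ^ ((2 - θ) / 2) - y ^ ((2 - θ) / 2))) ^ (2 / θ)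

lemma stolarsky_key (θ : ℝ) (hθ0 : θ ≠ 0) (hθ2 : θ ≠ 2) (x y : ℝ)
    (hy : 0 < y) (hxy : y < x) :
    y ≤ stolarskyMean θ x y ∧ stolarskyMean θ x y ≤ x := by
  set p : ℝ := (2 - θ) / 2 with hp
  have hp0 : p ≠ 0 := by
    simp only [hp]
    intro h
    apply hθ2
    field_simp at h
    linarith
  have hcont : ContinuousOn (fun t : ℝ => t ^ p) (Set.Icc y x) := by
    intro t ht
    exact (Real.continuousAt_rpow_const t p (Or.inl (ne_of_gt (lt_of_lt_of_le hy ht.1)))).continuousWithinAt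
  have hderiv : ∀ t ∈ Set.Ioo y x, HasDerivAt (fun t : ℝ => t ^ p) (p * t ^ (p - 1)) t := by
    intro t ht
    have := Real.hasDerivAt_rpow_const (x := t) (p := p) (Or.inl (ne_of_gt (hy.trans ht.1)))
    simpa [mul_comm] using this
  obtain ⟨c, hc, hceq⟩ := exists_hasDerivAt_eq_slope (fun t : ℝ => t ^ p) _ hxy hcont hderiv
  have hc0 : 0 < c := hy.trans hc.1
  have hxy0 : x - y ≠ 0 := sub_ne_zero.mpr (ne_of_gt hxy)
  have hcp : c ^ (p - 1) ≠ 0 := ne_of_gt (Real.rpow_pos_of_pos hc0 _)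
  have hsub : x ^ p - y ^ p = p * c ^ (p - 1) * (x - y) := by
    field_simp at hceq
    linarith [hceq]
  have hbase : p * (x - y) / (x ^ p - y ^ p) = c ^ (1 - p) := by
    rw [hsub]
    rw [show (1 : ℝ) - p = -(p - 1) by ring, Real.rpow_neg hc0.le]
    field_simp
  have hM : stolarskyMean θ x y = c := by
    unfold stolarskyMean
    rw [← hp, hbase, ← Real.rpow_mul hc0.le]
    have : (1 - p) * (2 / θ) = 1 := by
      simp only [hp]
      field_simp
      ring
    rw [this, Real.rpow_one]
  rw [hM]
  exact ⟨hc.1.le, hc.2.le⟩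

theorem stmt0 (θ : ℝ) (hθ0 : θ ≠ 0) (hθ2 : θ ≠ 2) :
    ∀ x y : ℝ, 0 < x → 0 < y → x ≠ y →
      min x y ≤ stolarskyMean θ x y ∧ stolarskyMean θ x y ≤ max x y := by
  have hsymm : ∀ x y : ℝ, stolarskyMean θ x y = stolarskyMean θ y x := by
    intro x y
    unfold stolarskyMean
    rw [show x - y = -(y - x) by ring,
      show x ^ ((2-θ)/2) - y ^ ((2-θ)/2) = -(y ^ ((2-θ)/2) - x ^ ((2-θ)/2)) by ring,
      mul_neg, neg_div_neg_eq]
  intro x y hx hy hne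
  rcases lt_or_gt_of_ne hne with h | h
  · have := stolarsky_key θ hθ0 hθ2 y x hx h
    rw [hsymm x y, min_eq_left h.le, max_eq_right h.le]
    exact this
  · have := stolarsky_key θ hθ0 hθ2 x y hy h
    rw [min_eq_right h.le, max_eq_left h.le]
    exact this
end

section
/- For fixed x, y > 0 with x ≠ y, the Stolarsky mean M_θ(x,y) is strictly decreasing as a function of θ on ℝ \ {0,2} (i.e., if θ < θ' with both in ℝ \ {0,2}, then M_θ(x,y) > M_{θ'}(x,y)). -/
open Real Set Filter Topology

lemma sinh_gt (τ : ℝ) (hτ : 0 < τ) : 2*τ < Real.exp τ - Real.exp (-τ) := by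
  have hA : 1 + τ + τ^2/2 + τ^3/6 ≤ Real.exp τ := by
    have := Real.sum_le_exp_of_nonneg hτ.le 4
    norm_num [Finset.sum_range_succ, Nat.factorial] at this
    linarith
  have hpos : (0:ℝ) < Real.exp τ := Real.exp_pos τ
  have hmul : Real.exp (-τ) * Real.exp τ = 1 := by
    rw [← Real.exp_add]; simp
  have hB : Real.exp (-τ) ≤ 1 - τ + τ^2/2 := by
    have hP : (0:ℝ) ≤ 1 - τ + τ^2/2 := by nlinarith [sq_nonneg (τ-1)]
    have h1 : (1 - τ + τ^2/2) * Real.exp τ ≥ 1 := by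
      nlinarith [mul_le_mul_of_nonneg_left hA hP, pow_pos hτ 3, pow_pos hτ 4, pow_pos hτ 5]
    have h2 : Real.exp (-τ) = (Real.exp τ)⁻¹ := Real.exp_neg τ
    rw [h2, inv_le_iff_one_le_mul₀ hpos]
    linarith [h1]
  nlinarith [pow_pos hτ 3]

/-- Key inequality: `d^2 * exp d < (exp d - 1)^2` for `d ≠ 0`. -/
lemma key_ineq {d : ℝ} (hd : d ≠ 0) : d^2 * Real.exp d < (Real.exp d - 1)^2 := by
  have main : ∀ c : ℝ, 0 < c → c^2 * Real.exp c < (Real.exp c - 1)^2 := by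
    intro c hc
    have h3 := sinh_gt (c/2) (by linarith)
    set u := Real.exp (c/2) with hu
    have hup : 0 < u := Real.exp_pos _
    have hinv : Real.exp (-(c/2)) = u⁻¹ := Real.exp_neg _
    rw [hinv] at h3
    -- c < u - u⁻¹
    have h4 : c * u < u^2 - 1 := by
      have := mul_lt_mul_of_pos_right h3 hup
      have huu : u⁻¹ * u = 1 := inv_mul_cancel₀ (ne_of_gt hup)
      nlinarith
    have hu2 : u^2 = Real.exp c := by
      rw [hu, sq, ← Real.exp_add]; norm_num
    have h5 : (c*u)^2 < (u^2-1)^2 := by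
      have h0 : 0 < c * u := by positivity
      nlinarith
    calc c^2 * Real.exp c = (c*u)^2 := by rw [← hu2]; ring
      _ < (u^2-1)^2 := h5
      _ = (Real.exp c - 1)^2 := by rw [hu2]
  rcases hd.lt_or_gt with h | h
  · have hm := main (-d) (by linarith)
    have he : Real.exp (-d) = (Real.exp d)⁻¹ := Real.exp_neg d
    rw [he] at hm
    have hp : 0 < Real.exp d := Real.exp_pos d
    have h2 := mul_lt_mul_of_pos_right hm (by positivity : (0:ℝ) < (Real.exp d)^2)
    have hinv : (Real.exp d)⁻¹ * Real.exp d = 1 := inv_mul_cancel₀ (ne_of_gt hp)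
    nlinarith [sq_nonneg (Real.exp d - 1)]
  · exact main d h

noncomputable def psiF (a b s : ℝ) : ℝ :=
  if s = 0 then a - b else (Real.exp (a*s) - Real.exp (b*s)) / s

noncomputable def HF (a b s : ℝ) : ℝ := Real.log (psiF a b s)

section

variable {a b : ℝ} (hab : b < a)

include hab in
lemma psiF_pos : ∀ s : ℝ, 0 < psiF a b s := by
  intro s
  rcases lt_trichotomy s 0 with h | h | h
  · rw [psiF, if_neg h.ne]
    apply div_pos_of_neg_of_neg _ h
    have : a * s < b * s := by nlinarith
    simp only [sub_neg]
    exact Real.exp_lt_exp.2 this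
  · rw [psiF, if_pos h]; linarith
  · rw [psiF, if_neg h.ne']
    apply div_pos _ h
    have : b * s < a * s := by nlinarith
    simp only [sub_pos]
    exact Real.exp_lt_exp.2 this

include hab in
lemma expSub_ne {s : ℝ} (hs : s ≠ 0) : Real.exp (a*s) - Real.exp (b*s) ≠ 0 := by
  have h := psiF_pos hab s
  rw [psiF, if_neg hs] at h
  intro hc
  rw [hc, zero_div] at h
  exact lt_irrefl _ h

lemma psiF_eventuallyEq {s : ℝ} (hs : s ≠ 0) :
    psiF a b =ᶠ[nhds s] (fun t => (Real.exp (a*t) - Real.exp (b*t)) / t) := by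
  filter_upwards [isOpen_ne.mem_nhds hs] with t ht
  rw [psiF, if_neg ht]

lemma hasDerivAt_psiF {s : ℝ} (hs : s ≠ 0) :
    HasDerivAt (psiF a b)
      (((a * Real.exp (a*s) - b * Real.exp (b*s)) * s - (Real.exp (a*s) - Real.exp (b*s))) / s^2) s := by
  have hnum : HasDerivAt (fun t => Real.exp (a*t) - Real.exp (b*t))
      (a * Real.exp (a*s) - b * Real.exp (b*s)) s := by
    have h1 : HasDerivAt (fun t => Real.exp (a*t)) (Real.exp (a*s) * a) s :=
      by simpa using ((hasDerivAt_id s).const_mul a).exp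
    have h2 : HasDerivAt (fun t => Real.exp (b*t)) (Real.exp (b*s) * b) s :=
      by simpa using ((hasDerivAt_id s).const_mul b).exp
    exact (h1.sub h2).congr_deriv (by ring)
  have hden : HasDerivAt (fun t : ℝ => t) 1 s := hasDerivAt_id s
  have := hnum.div hden hs
  simp only [mul_one] at this
  exact this.congr_of_eventuallyEq (psiF_eventuallyEq hs)
end

section
variable {a b : ℝ}

lemma tendsto_inner :
    Tendsto (fun t => (a * Real.exp (a*t) - b * Real.exp (b*t) - (a-b)) / (2*t))
      (𝓝[≠] (0:ℝ)) (𝓝 ((a^2-b^2)/2)) := by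
  apply HasDerivAt.lhopital_zero_nhdsNE
    (f' := fun t => a^2 * Real.exp (a*t) - b^2 * Real.exp (b*t)) (g' := fun _ => (2:ℝ))
  · filter_upwards with t
    have h1 : HasDerivAt (fun t => a * Real.exp (a*t)) (a^2 * Real.exp (a*t)) t := by
      have := (((hasDerivAt_id t).const_mul a).exp).const_mul a
      simp only [id_eq, mul_one] at this
      exact this.congr_deriv (by ring)
    have h2 : HasDerivAt (fun t => b * Real.exp (b*t)) (b^2 * Real.exp (b*t)) t := by
      have := (((hasDerivAt_id t).const_mul b).exp).const_mul b
      simp only [id_eq, mul_one] at this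
      exact this.congr_deriv (by ring)
    simpa using (h1.sub h2).sub_const (a-b)
  · filter_upwards with t
    simpa using (hasDerivAt_id t).const_mul (2:ℝ)
  · filter_upwards with t; norm_num
  · have hc : Continuous (fun t => a * Real.exp (a*t) - b * Real.exp (b*t) - (a-b)) := by
      continuity
    have := hc.tendsto' 0 0 (by simp)
    exact this.mono_left nhdsWithin_le_nhds
  · have hc : Continuous (fun t : ℝ => 2*t) := by continuity
    have := hc.tendsto' 0 0 (by simp)
    exact this.mono_left nhdsWithin_le_nhds
  · have hc : Continuous (fun t => (a^2 * Real.exp (a*t) - b^2 * Real.exp (b*t)) / 2) := by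
      continuity
    have := hc.tendsto' 0 ((a^2-b^2)/2) (by simp)
    exact this.mono_left nhdsWithin_le_nhds

lemma tendsto_outer :
    Tendsto (fun t => (Real.exp (a*t) - Real.exp (b*t) - (a-b)*t) / t^2)
      (𝓝[≠] (0:ℝ)) (𝓝 ((a^2-b^2)/2)) := by
  apply HasDerivAt.lhopital_zero_nhdsNE
    (f' := fun t => a * Real.exp (a*t) - b * Real.exp (b*t) - (a-b))
    (g' := fun t => 2*t)
  · filter_upwards with t
    have h1 : HasDerivAt (fun t => Real.exp (a*t)) (a * Real.exp (a*t)) t := by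
      have := ((hasDerivAt_id t).const_mul a).exp
      simp only [id_eq, mul_one] at this
      exact this.congr_deriv (by ring)
    have h2 : HasDerivAt (fun t => Real.exp (b*t)) (b * Real.exp (b*t)) t := by
      have := ((hasDerivAt_id t).const_mul b).exp
      simp only [id_eq, mul_one] at this
      exact this.congr_deriv (by ring)
    have h3 : HasDerivAt (fun t : ℝ => (a-b)*t) (a-b) t := by
      simpa using (hasDerivAt_id t).const_mul (a-b)
    exact (h1.sub h2).sub h3
  · filter_upwards with t
    have := hasDerivAt_pow 2 t
    exact this.congr_deriv (by norm_num)
  · filter_upwards [self_mem_nhdsWithin] with t ht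
    simp only [mem_compl_iff, mem_singleton_iff] at ht
    positivity
  · have hc : Continuous (fun t => Real.exp (a*t) - Real.exp (b*t) - (a-b)*t) := by
      continuity
    have := hc.tendsto' 0 0 (by simp)
    exact this.mono_left nhdsWithin_le_nhds
  · have hc : Continuous (fun t : ℝ => t^2) := by continuity
    have := hc.tendsto' 0 0 (by simp)
    exact this.mono_left nhdsWithin_le_nhds
  · exact tendsto_inner

lemma hasDerivAt_psiF_zero : HasDerivAt (psiF a b) ((a^2 - b^2)/2) 0 := by
  rw [hasDerivAt_iff_tendsto_slope]
  apply tendsto_outer.congr'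
  filter_upwards [self_mem_nhdsWithin] with t ht
  simp only [mem_compl_iff, mem_singleton_iff] at ht
  rw [slope_def_field, psiF, psiF, if_neg ht, if_pos rfl]
  field_simp
  ring
end

noncomputable def phiF (a b s : ℝ) : ℝ :=
  (a * Real.exp (a*s) - b * Real.exp (b*s)) / (Real.exp (a*s) - Real.exp (b*s)) - 1/s

section
variable {a b : ℝ} (hab : b < a)

include hab in
lemma hasDerivAt_HF {s : ℝ} (hs : s ≠ 0) : HasDerivAt (HF a b) (phiF a b s) s := by
  have h := (hasDerivAt_psiF (a := a) (b := b) hs).log (ne_of_gt (psiF_pos hab s))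
  refine h.congr_deriv (Eq.symm ?_)
  have hE := expSub_ne hab hs
  rw [psiF, if_neg hs, phiF]
  generalize Real.exp (a*s) = A, Real.exp (b*s) = B at *
  field_simp

include hab in
lemma hasDerivAt_HF_zero : HasDerivAt (HF a b) ((a+b)/2) 0 := by
  have h := (hasDerivAt_psiF_zero (a := a) (b := b)).log (ne_of_gt (psiF_pos hab 0))
  refine h.congr_deriv (Eq.symm ?_)
  rw [psiF, if_pos rfl]
  have : a - b ≠ 0 := by linarith
  field_simp
  ring

include hab in
lemma derivHF_eq {s : ℝ} (hs : s ≠ 0) : deriv (HF a b) s = phiF a b s :=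
  (hasDerivAt_HF hab hs).deriv

include hab in
lemma hasDerivAt_phiF {s : ℝ} (hs : s ≠ 0) :
    HasDerivAt (phiF a b)
      (1/s^2 - (a-b)^2 * Real.exp (a*s) * Real.exp (b*s) / (Real.exp (a*s) - Real.exp (b*s))^2) s := by
  have hE := expSub_ne hab hs
  have h1 : HasDerivAt (fun t => a * Real.exp (a*t)) (a^2 * Real.exp (a*s)) s := by
    have := (((hasDerivAt_id s).const_mul a).exp).const_mul a
    simp only [id_eq, mul_one] at this
    exact this.congr_deriv (by ring)
  have h2 : HasDerivAt (fun t => b * Real.exp (b*t)) (b^2 * Real.exp (b*s)) s := by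
    have := (((hasDerivAt_id s).const_mul b).exp).const_mul b
    simp only [id_eq, mul_one] at this
    exact this.congr_deriv (by ring)
  have h3 : HasDerivAt (fun t => Real.exp (a*t)) (a * Real.exp (a*s)) s := by
    have := ((hasDerivAt_id s).const_mul a).exp
    simp only [id_eq, mul_one] at this
    exact this.congr_deriv (by ring)
  have h4 : HasDerivAt (fun t => Real.exp (b*t)) (b * Real.exp (b*s)) s := by
    have := ((hasDerivAt_id s).const_mul b).exp
    simp only [id_eq, mul_one] at this
    exact this.congr_deriv (by ring)
  have hq := ((h1.sub h2).div (h3.sub h4) hE)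
  have hinv : HasDerivAt (fun t : ℝ => 1/t) (-(1/s^2)) s := by
    have := hasDerivAt_inv hs
    simp only [one_div]
    convert this using 1
  have := hq.sub hinv
  refine this.congr_deriv (Eq.symm ?_)
  simp only [Pi.sub_apply]
  field_simp
  ring

include hab in
lemma phiF_deriv_pos {s : ℝ} (hs : s ≠ 0) :
    0 < 1/s^2 - (a-b)^2 * Real.exp (a*s) * Real.exp (b*s) / (Real.exp (a*s) - Real.exp (b*s))^2 := by
  have hE := expSub_ne hab hs
  have hd : (a-b)*s ≠ 0 := mul_ne_zero (by linarith) hs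
  have hk := key_ineq hd
  have hEa : Real.exp (a*s) = Real.exp (b*s) * Real.exp ((a-b)*s) := by
    rw [← Real.exp_add]; ring_nf
  rw [sub_pos, div_lt_div_iff₀ (by simpa using sq_pos_iff.mpr hE) (by positivity : (0:ℝ) < s^2)]
  have hrhs : (Real.exp (a*s) - Real.exp (b*s))^2 = Real.exp (b*s)^2 * (Real.exp ((a-b)*s) - 1)^2 := by
    rw [hEa]; ring
  have hlhs : (a-b)^2 * Real.exp (a*s) * Real.exp (b*s) * s^2
      = Real.exp (b*s)^2 * (((a-b)*s)^2 * Real.exp ((a-b)*s)) := by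
    rw [hEa]; ring
  rw [one_mul, hrhs, hlhs]
  exact mul_lt_mul_of_pos_left hk (by positivity)
end

section
variable {a b : ℝ} (hab : b < a)

include hab in
lemma differentiable_HF : Differentiable ℝ (HF a b) := by
  intro s
  rcases eq_or_ne s 0 with rfl | hs
  · exact (hasDerivAt_HF_zero hab).differentiableAt
  · exact (hasDerivAt_HF hab hs).differentiableAt

include hab in
lemma hasDerivAt_derivHF {s : ℝ} (hs : s ≠ 0) :
    HasDerivAt (deriv (HF a b))
      (1/s^2 - (a-b)^2 * Real.exp (a*s) * Real.exp (b*s) / (Real.exp (a*s) - Real.exp (b*s))^2) s := by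
  apply (hasDerivAt_phiF hab hs).congr_of_eventuallyEq
  filter_upwards [isOpen_ne.mem_nhds hs] with t ht
  exact derivHF_eq hab ht

include hab in
lemma strictMonoOn_derivHF_Ioi : StrictMonoOn (deriv (HF a b)) (Ioi 0) := by
  apply strictMonoOn_of_deriv_pos (convex_Ioi 0)
  · exact fun t ht =>
      ((hasDerivAt_derivHF hab (ne_of_gt ht)).differentiableAt.continuousAt).continuousWithinAt
  · intro t ht
    rw [interior_Ioi] at ht
    rw [(hasDerivAt_derivHF hab (ne_of_gt ht)).deriv]
    exact phiF_deriv_pos hab (ne_of_gt ht)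

include hab in
lemma strictMonoOn_derivHF_Iio : StrictMonoOn (deriv (HF a b)) (Iio 0) := by
  apply strictMonoOn_of_deriv_pos (convex_Iio 0)
  · exact fun t ht =>
      ((hasDerivAt_derivHF hab (ne_of_lt ht)).differentiableAt.continuousAt).continuousWithinAt
  · intro t ht
    rw [interior_Iio] at ht
    rw [(hasDerivAt_derivHF hab (ne_of_lt ht)).deriv]
    exact phiF_deriv_pos hab (ne_of_lt ht)

include hab in
lemma sc_Ici : StrictConvexOn ℝ (Ici 0) (HF a b) := by
  apply StrictMonoOn.strictConvexOn_of_deriv (convex_Ici 0)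
    ((differentiable_HF hab).continuous.continuousOn)
  rw [interior_Ici]; exact strictMonoOn_derivHF_Ioi hab

include hab in
lemma sc_Iic : StrictConvexOn ℝ (Iic 0) (HF a b) := by
  apply StrictMonoOn.strictConvexOn_of_deriv (convex_Iic 0)
    ((differentiable_HF hab).continuous.continuousOn)
  rw [interior_Iic]; exact strictMonoOn_derivHF_Iio hab

include hab in
lemma bridge_pos {s : ℝ} (hs : 0 < s) : deriv (HF a b) 0 < deriv (HF a b) s := by
  have hv : (0:ℝ) < s/2 := by linarith
  obtain ⟨c, hc, hceq⟩ := exists_hasDerivAt_eq_slope (HF a b) (deriv (HF a b)) hv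
    ((differentiable_HF hab).continuous.continuousOn)
    (fun t _ => ((differentiable_HF hab) t).hasDerivAt)
  have hlim : Tendsto (slope (HF a b) 0) (𝓝[>] 0) (𝓝 (deriv (HF a b) 0)) := by
    rw [(hasDerivAt_HF_zero hab).deriv]
    exact (hasDerivAt_iff_tendsto_slope.1 (hasDerivAt_HF_zero hab)).mono_left
      (nhdsWithin_mono 0 fun u hu => ne_of_gt hu)
  have hev : ∀ᶠ u in 𝓝[>] (0:ℝ), slope (HF a b) 0 u ≤ slope (HF a b) 0 (s/2) := by
    filter_upwards [Ioo_mem_nhdsGT_of_mem (Set.left_mem_Ico.2 hv)] with u hu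
    rw [slope_def_field, slope_def_field]
    exact ((sc_Ici hab).secant_strict_mono self_mem_Ici (le_of_lt hu.1) hv.le
      (ne_of_gt hu.1) (ne_of_gt hv) hu.2).le
  have h1 : deriv (HF a b) 0 ≤ slope (HF a b) 0 (s/2) := le_of_tendsto hlim hev
  have h2 : slope (HF a b) 0 (s/2) = deriv (HF a b) c := by
    rw [slope_def_field]; exact hceq.symm
  have h3 : deriv (HF a b) c < deriv (HF a b) s :=
    strictMonoOn_derivHF_Ioi hab hc.1 hs (by linarith [hc.2])
  linarith

include hab in
lemma bridge_neg {s : ℝ} (hs : s < 0) : deriv (HF a b) s < deriv (HF a b) 0 := by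
  have hv : s/2 < 0 := by linarith
  have hsv : s < s/2 := by linarith
  obtain ⟨c, hc, hceq⟩ := exists_hasDerivAt_eq_slope (HF a b) (deriv (HF a b)) hv
    ((differentiable_HF hab).continuous.continuousOn)
    (fun t _ => ((differentiable_HF hab) t).hasDerivAt)
  have hlim : Tendsto (slope (HF a b) 0) (𝓝[<] 0) (𝓝 (deriv (HF a b) 0)) := by
    rw [(hasDerivAt_HF_zero hab).deriv]
    exact (hasDerivAt_iff_tendsto_slope.1 (hasDerivAt_HF_zero hab)).mono_left
      (nhdsWithin_mono 0 fun u hu => ne_of_lt hu)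
  have hev : ∀ᶠ u in 𝓝[<] (0:ℝ), slope (HF a b) 0 (s/2) ≤ slope (HF a b) 0 u := by
    filter_upwards [Ioo_mem_nhdsLT_of_mem (Set.right_mem_Ioc.2 hv)] with u hu
    rw [slope_def_field, slope_def_field]
    exact ((sc_Iic hab).secant_strict_mono self_mem_Iic hv.le (le_of_lt hu.2)
      (ne_of_lt hv) (ne_of_lt hu.2) hu.1).le
  have h1 : slope (HF a b) 0 (s/2) ≤ deriv (HF a b) 0 := ge_of_tendsto hlim hev
  have h2 : slope (HF a b) 0 (s/2) = deriv (HF a b) c := by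
    rw [slope_comm, slope_def_field]; exact hceq.symm
  have h3 : deriv (HF a b) s < deriv (HF a b) c :=
    strictMonoOn_derivHF_Iio hab hs hc.2 (by linarith [hc.1])
  linarith

include hab in
lemma strictMono_derivHF : StrictMono (deriv (HF a b)) := by
  intro s1 s2 h
  rcases lt_trichotomy s1 0 with h1 | rfl | h1
  · rcases lt_trichotomy s2 0 with h2 | rfl | h2
    · exact strictMonoOn_derivHF_Iio hab h1 h2 h
    · exact bridge_neg hab h1
    · exact (bridge_neg hab h1).trans (bridge_pos hab h2)
  · exact bridge_pos hab h
  · exact strictMonoOn_derivHF_Ioi hab h1 (h1.trans h) h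

include hab in
lemma sc_univ : StrictConvexOn ℝ univ (HF a b) :=
  StrictMono.strictConvexOn_univ_of_deriv (differentiable_HF hab).continuous
    (strictMono_derivHF hab)
end

lemma stolarsky_symm (θ x y : ℝ) : stolarskyMean θ x y = stolarskyMean θ y x := by
  unfold stolarskyMean
  congr 1
  rw [show ((2-θ)/2) * (x-y) = -(((2-θ)/2) * (y-x)) by ring,
    show x ^ ((2-θ)/2) - y ^ ((2-θ)/2) = -(y ^ ((2-θ)/2) - x ^ ((2-θ)/2)) by ring,
    neg_div_neg_eq]

lemma stolarsky_repr {x y : ℝ} (hy : 0 < y) (hxy : y < x) {θ : ℝ} (hθ0 : θ ≠ 0) (hθ2 : θ ≠ 2) :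
    stolarskyMean θ x y =
      Real.exp ((HF (Real.log x) (Real.log y) ((2-θ)/2) - HF (Real.log x) (Real.log y) 1)
        / ((2-θ)/2 - 1)) := by
  have hx : 0 < x := hy.trans hxy
  set a := Real.log x with ha
  set b := Real.log y with hb
  have hab : b < a := Real.log_lt_log hy hxy
  set p : ℝ := (2-θ)/2 with hp
  have hp0 : p ≠ 0 := by
    rw [hp]; intro h; apply hθ2; field_simp at h; linarith
  have hp1 : p ≠ 1 := by
    rw [hp]; intro h; apply hθ0; field_simp at h; linarith
  have hxp : x ^ p = Real.exp (a * p) := by rw [Real.rpow_def_of_pos hx]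
  have hyp : y ^ p = Real.exp (b * p) := by rw [Real.rpow_def_of_pos hy]
  have hpsi1 : psiF a b 1 = x - y := by
    rw [psiF, if_neg one_ne_zero]
    simp [ha, hb, Real.exp_log hx, Real.exp_log hy]
  have hpsip : psiF a b p = (Real.exp (a*p) - Real.exp (b*p)) / p := by
    rw [psiF, if_neg hp0]
  have hpsip_pos := psiF_pos hab p
  have hB : p * (x - y) / (x ^ p - y ^ p) = (x - y) / psiF a b p := by
    rw [hxp, hyp, hpsip, div_div_eq_mul_div]
    ring
  have hBpos : 0 < (x - y) / psiF a b p := div_pos (by linarith) hpsip_pos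
  have hlogB : Real.log ((x - y) / psiF a b p) = HF a b 1 - HF a b p := by
    rw [Real.log_div (by linarith) (ne_of_gt hpsip_pos), HF, HF, hpsi1]
  rw [stolarskyMean, ← hp, hB, Real.rpow_def_of_pos hBpos, hlogB]
  congr 1
  have h2θ : (2:ℝ)/θ = 1/(1-p) := by
    rw [hp]; field_simp; rw [sub_sub_cancel, div_self hθ0]
  rw [h2θ, mul_one_div, show p - 1 = -(1-p) by ring,
    show HF a b p - HF a b 1 = -(HF a b 1 - HF a b p) by ring, neg_div_neg_eq]

theorem stmt5_aux {x y : ℝ} (hy : 0 < y) (hxy : y < x)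
    (θ θ' : ℝ) (hθ0 : θ ≠ 0) (hθ2 : θ ≠ 2) (hθ'0 : θ' ≠ 0) (hθ'2 : θ' ≠ 2)
    (hlt : θ < θ') :
    stolarskyMean θ' x y < stolarskyMean θ x y := by
  have hab : Real.log y < Real.log x := Real.log_lt_log hy hxy
  rw [stolarsky_repr hy hxy hθ0 hθ2, stolarsky_repr hy hxy hθ'0 hθ'2]
  apply Real.exp_lt_exp.2
  have hplt : (2-θ')/2 < (2-θ)/2 := by linarith
  have hp1 : (2-θ)/2 ≠ 1 := by intro h; apply hθ0; field_simp at h; linarith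
  have hp1' : (2-θ')/2 ≠ 1 := by intro h; apply hθ'0; field_simp at h; linarith
  exact (sc_univ hab).secant_strict_mono (mem_univ 1) (mem_univ _) (mem_univ _)
    hp1' hp1 hplt

theorem stmt5 (x y : ℝ) (hx : 0 < x) (hy : 0 < y) (hxy : x ≠ y)
    (θ θ' : ℝ) (hθ0 : θ ≠ 0) (hθ2 : θ ≠ 2) (hθ'0 : θ' ≠ 0) (hθ'2 : θ' ≠ 2)
    (hlt : θ < θ') :
    stolarskyMean θ' x y < stolarskyMean θ x y := by
  rcases hxy.lt_or_gt with h | h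
  · rw [stolarsky_symm θ' x y, stolarsky_symm θ x y]
    exact stmt5_aux hx h θ θ' hθ0 hθ2 hθ'0 hθ'2 hlt
  · exact stmt5_aux hy h θ θ' hθ0 hθ2 hθ'0 hθ'2 hlt
end

section
/- For all x > 0 with x ≠ 1, the Stolarsky mean M_10(x,1) = ((−4)·(x−1)/(x^(−4)−1))^(1/5) is strictly greater than the harmonic mean M_H(x,1) = 2x/(x+1). -/
theorem stmt7 (x : ℝ) (hx : 0 < x) (hx1 : x ≠ 1) :
    2 * x / (x + 1) < stolarskyMean 10 x 1 := by
  have hx1' : x + 1 > 0 := by linarith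
  have hx2 : x ^ 2 + 1 > 0 := by positivity
  have hbase : ((2 - (10:ℝ)) / 2) * (x - 1) / (x ^ ((2 - (10:ℝ)) / 2) - 1 ^ ((2 - (10:ℝ)) / 2))
      = 4 * x ^ 4 / ((x + 1) * (x ^ 2 + 1)) := by
    have h4 : x ^ ((2 - (10:ℝ)) / 2) = (x ^ (4:ℕ))⁻¹ := by
      rw [show (2 - (10:ℝ)) / 2 = -(4:ℕ) by norm_num, Real.rpow_neg hx.le,
        Real.rpow_natCast]
    rw [h4, Real.one_rpow]
    have hx4 : (x:ℝ) ^ (4:ℕ) ≠ 0 := by positivity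
    have hx41 : x ^ (4:ℕ) ≠ 1 := by
      intro h
      have h0 : (x - 1) * ((x + 1) * (x ^ 2 + 1)) = 0 := by linear_combination h
      rcases mul_eq_zero.mp h0 with h1 | h1
      · exact hx1 (by linarith)
      · nlinarith
    have hsub : (1:ℝ) - x ^ (4:ℕ) ≠ 0 := fun h => hx41 (by linarith)
    have hden : (x ^ (4:ℕ))⁻¹ - 1 ≠ 0 := by
      intro h
      have : (x ^ (4:ℕ))⁻¹ = 1 := by linarith
      exact hx41 (by field_simp at this; linarith)
    field_simp
    ring
  have key : (2 * x / (x + 1)) ^ (5:ℕ) < 4 * x ^ 4 / ((x + 1) * (x ^ 2 + 1)) := by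
    rw [div_pow, div_lt_div_iff₀ (by positivity) (by positivity)]
    have h14 : (x - 1) ^ 4 > 0 := by
      have : x - 1 ≠ 0 := sub_ne_zero.mpr hx1
      positivity
    nlinarith [pow_pos hx 4, pow_pos hx1' 4, mul_pos (pow_pos hx 4) h14,
      mul_pos hx1' (mul_pos (pow_pos hx 4) h14)]
  have hL : 0 ≤ 2 * x / (x + 1) := by positivity
  unfold stolarskyMean
  rw [hbase]
  calc 2 * x / (x + 1)
      = ((2 * x / (x + 1)) ^ (5:ℕ)) ^ ((2:ℝ)/10) := by
        rw [← Real.rpow_natCast (2 * x / (x + 1)) 5, ← Real.rpow_mul hL]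
        norm_num
    _ < (4 * x ^ 4 / ((x + 1) * (x ^ 2 + 1))) ^ ((2:ℝ)/10) := by
        apply Real.rpow_lt_rpow (by positivity) key (by norm_num)
end

section
/- For every θ > 10, there exists δ > 0 such that for all x with 0 < |x - 1| < δ, the Stolarsky mean satisfies M_θ(x,1) < 2x/(x+1) (the harmonic mean). -/
open Real
set_option maxHeartbeats 1000000


lemma exp_near (y : ℝ) (h : |y| ≤ 1) :
    |Real.exp y - (1 + y + y^2/2 + y^3/6)| ≤ 5*y^4/96 := by
  have h4 := Real.exp_bound h (n := 4) (by norm_num)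
  have hs : (∑ m ∈ Finset.range 4, y ^ m / m.factorial) = 1 + y + y^2/2 + y^3/6 := by
    norm_num [Finset.sum_range_succ, Nat.factorial]
    try ring
  rw [hs] at h4
  have ha : |y|^4 = y^4 := by
    rw [← abs_pow]; exact abs_of_nonneg (by positivity)
  rw [ha] at h4
  calc |Real.exp y - (1 + y + y^2/2 + y^3/6)| ≤ y^4 * ((4+1)/(24*4)) := by
        convert h4 using 2 <;> norm_num [Nat.factorial]
    _ = 5*y^4/96 := by ring

lemma both_near (y : ℝ) (h0 : 0 ≤ y) (h1 : y ≤ 1) :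
    |Real.exp y - (1 + y + y^2/2 + y^3/6)| ≤ 5*y^4/96 ∧
    |Real.exp (-y) - (1 - y + y^2/2 - y^3/6)| ≤ 5*y^4/96 := by
  have hy : |y| ≤ 1 := by rw [abs_of_nonneg h0]; exact h1
  have A := exp_near y hy
  have B := exp_near (-y) (by rwa [abs_neg])
  constructor
  · exact A
  · convert B using 2 <;> ring

lemma sinh_up (y : ℝ) (h0 : 0 ≤ y) (h1 : y ≤ 1) :
    Real.sinh y ≤ y + y^3/6 + 5*y^4/96 := by
  obtain ⟨A, B⟩ := both_near y h0 h1
  rw [abs_le] at A B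
  rw [Real.sinh_eq]
  nlinarith [A.1, A.2, B.1, B.2]

lemma sinh_low (y : ℝ) (h0 : 0 ≤ y) (h1 : y ≤ 1) :
    y + y^3/6 - 5*y^4/96 ≤ Real.sinh y := by
  obtain ⟨A, B⟩ := both_near y h0 h1
  rw [abs_le] at A B
  rw [Real.sinh_eq]
  nlinarith [A.1, A.2, B.1, B.2]

lemma cosh_up (y : ℝ) (h0 : 0 ≤ y) (h1 : y ≤ 1) :
    Real.cosh y ≤ 1 + y^2/2 + 5*y^4/96 := by
  obtain ⟨A, B⟩ := both_near y h0 h1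
  rw [abs_le] at A B
  rw [Real.cosh_eq]
  nlinarith [A.1, A.2, B.1, B.2]

lemma exp_quad_up (w : ℝ) (h0 : 0 ≤ w) (h1 : w ≤ 1) :
    Real.exp w ≤ 1 + w + 3*w^2/4 := by
  have h2 := Real.exp_bound (x := w) (by rw [abs_of_nonneg h0]; exact h1) (n := 2) (by norm_num)
  have hs : (∑ m ∈ Finset.range 2, w ^ m / m.factorial) = 1 + w := by
    norm_num [Finset.sum_range_succ, Nat.factorial]
  rw [hs, abs_le] at h2
  have ha : |w|^2 = w^2 := by rw [← abs_pow]; exact abs_of_nonneg (by positivity)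
  rw [ha] at h2
  have := h2.2
  norm_num [Nat.factorial] at this
  nlinarith [this]


lemma middle (q v : ℝ) (hq : 4 < q) (hv0 : 0 < v) (hv2 : v ≤ 1/(1+q)^2)
    (hm : (5+q^3)*v < (q^2-3*q-4)/6) :
    (1+v^2/6+v^3)*(1+((1+q)*(v^2/2+v^4))+3*((1+q)*(v^2/2+v^4))^2/4)
      < 1 + q^2*v^2/6 - q^3*v^3 := by
  have hq1 : (0:ℝ) < 1+q := by linarith
  have hA : (1+q)^2*v ≤ 1 := by
    rw [div_eq_mul_inv, one_mul] at hv2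
    calc (1+q)^2*v ≤ (1+q)^2*((1+q)^2)⁻¹ := by
          apply mul_le_mul_of_nonneg_left hv2 (by positivity)
      _ = 1 := by field_simp
  have hv25 : v ≤ 1/25 := by nlinarith
  have hv1 : v ≤ 1 := by linarith
  have hB : (1+q)*v ≤ 1 := by nlinarith [mul_pos hq1 hv0]
  set w : ℝ := (1+q)*(v^2/2+v^4) with hwdef
  have hw0 : 0 ≤ w := by positivity
  have hw4 : (1+q)*v^4 ≤ v^3 := by
    have := mul_le_mul_of_nonneg_right hB (le_of_lt (pow_pos hv0 3))
    nlinarith [this]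
  have hww : w ≤ (1+q)*v^2 := by nlinarith
  have hwv : (1+q)*v^2 ≤ v := by
    have := mul_le_mul_of_nonneg_right hB (le_of_lt hv0)
    nlinarith [this]
  have hw1 : w ≤ 1 := by linarith
  have hsq : w^2 ≤ v^3 := by
    have h1 : w*w ≤ ((1+q)*v^2)*((1+q)*v^2) := mul_self_le_mul_self hw0 hww
    have h2 : (1+q)^2*v*v^3 ≤ 1*v^3 :=
      mul_le_mul_of_nonneg_right hA (le_of_lt (pow_pos hv0 3))
    nlinarith [h1, h2]
  have hE1 : 3*w^2/4 ≤ (3/4)*v^3 := by linarith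
  have hE2 : (v^2/6+v^3)*(w+3*w^2/4) ≤ 2*v^3 := by
    have hs1 : w+3*w^2/4 ≤ 2*w := by nlinarith
    have hs2 : v^2/6+v^3 ≤ v^2 := by nlinarith
    have hp : (v^2/6+v^3)*(w+3*w^2/4) ≤ v^2*(2*w) := by
      apply mul_le_mul hs2 hs1 (by positivity) (by positivity)
    have hq2 : v^2*(2*w) ≤ 2*v^3 := by
      have h3 : v^2*w ≤ v^2*((1+q)*v^2) := mul_le_mul_of_nonneg_left hww (by positivity)
      nlinarith [h3, hw4, mul_le_mul_of_nonneg_left hw4 (le_of_lt hv0)]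
    linarith
  have hmv : (5+q^3)*v^3 < (q^2-3*q-4)/6*v^2 := by
    have := mul_lt_mul_of_pos_right hm (show (0:ℝ) < v^2 by positivity)
    calc (5+q^3)*v^3 = (5+q^3)*v*v^2 := by ring
      _ < (q^2-3*q-4)/6*v^2 := this
  have expand : (1+v^2/6+v^3)*(1+w+3*w^2/4)
      = 1 + w + 3*w^2/4 + (v^2/6+v^3) + (v^2/6+v^3)*(w+3*w^2/4) := by ring
  rw [expand]
  have hwlin : w = (1+q)*v^2/2 + (1+q)*v^4 := by rw [hwdef]; ring
  linarith [hE1, hE2, hw4, hmv, hwlin, pow_pos hv0 3]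

lemma core (q v : ℝ) (hq : 4 < q) (hv0 : 0 < v) (hv2 : v ≤ 1/(1+q)^2)
    (hm : (5+q^3)*v < (q^2-3*q-4)/6) :
    (Real.sinh v / v) * Real.cosh v ^ (1+q) < Real.sinh (q*v) / (q*v) := by
  have hq0 : (0:ℝ) < q := by linarith
  have hq1 : (0:ℝ) < 1+q := by linarith
  have hA : (1+q)^2*v ≤ 1 := by
    rw [div_eq_mul_inv, one_mul] at hv2
    calc (1+q)^2*v ≤ (1+q)^2*((1+q)^2)⁻¹ := by
          apply mul_le_mul_of_nonneg_left hv2 (by positivity)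
      _ = 1 := by field_simp
  have hv25 : v ≤ 1/25 := by nlinarith
  have hv1 : v ≤ 1 := by linarith
  have hB : (1+q)*v ≤ 1 := by nlinarith [mul_pos hq1 hv0]
  have hqv0 : 0 < q*v := mul_pos hq0 hv0
  have hqv1 : q*v ≤ 1 := by nlinarith
  -- bound on sinh v / v
  have hS : Real.sinh v / v ≤ 1 + v^2/6 + v^3 := by
    rw [div_le_iff₀ hv0]
    nlinarith [sinh_up v hv0.le hv1, pow_pos hv0 4]
  -- bound on cosh v ^ (1+q)
  have hcosh := Real.cosh_pos v
  have hc : Real.cosh v ≤ Real.exp (v^2/2+v^4) := by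
    nlinarith [cosh_up v hv0.le hv1, Real.add_one_le_exp (v^2/2+v^4), pow_pos hv0 4]
  have hw0 : (0:ℝ) ≤ (1+q)*(v^2/2+v^4) := by positivity
  have hw1 : (1+q)*(v^2/2+v^4) ≤ 1 := by
    have hvsq : v^2 ≤ 1/2 := by nlinarith
    have hv4 : v^4 ≤ v^2/2 := by
      have := mul_le_mul_of_nonneg_left hvsq (sq_nonneg v)
      nlinarith [this]
    have hww : (1+q)*(v^2/2+v^4) ≤ (1+q)*v^2 := by
      have := mul_le_mul_of_nonneg_left hv4 hq1.le
      nlinarith [this]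
    have hwv : (1+q)*v^2 ≤ v := by
      have := mul_le_mul_of_nonneg_right hB (le_of_lt hv0)
      nlinarith [this]
    linarith
  have hrp : Real.cosh v ^ (1+q) ≤ 1+((1+q)*(v^2/2+v^4))+3*((1+q)*(v^2/2+v^4))^2/4 := by
    calc Real.cosh v ^ (1+q) ≤ (Real.exp (v^2/2+v^4)) ^ (1+q) :=
          Real.rpow_le_rpow hcosh.le hc hq1.le
      _ = Real.exp ((1+q)*(v^2/2+v^4)) := by
          rw [← Real.exp_mul, mul_comm]
      _ ≤ 1+((1+q)*(v^2/2+v^4))+3*((1+q)*(v^2/2+v^4))^2/4 :=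
          exp_quad_up _ hw0 hw1
  -- lower bound on sinh(qv)/(qv)
  have hT : 1 + q^2*v^2/6 - q^3*v^3 ≤ Real.sinh (q*v) / (q*v) := by
    rw [le_div_iff₀ hqv0]
    nlinarith [sinh_low (q*v) hqv0.le hqv1, pow_pos hqv0 4]
  calc Real.sinh v / v * Real.cosh v ^ (1+q)
      ≤ (1+v^2/6+v^3) * (1+((1+q)*(v^2/2+v^4))+3*((1+q)*(v^2/2+v^4))^2/4) := by
        apply mul_le_mul hS hrp (Real.rpow_nonneg hcosh.le _) (by positivity)
    _ < 1 + q^2*v^2/6 - q^3*v^3 := middle q v hq hv0 hv2 hm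
    _ ≤ _ := hT

lemma sinh_div_pos {t : ℝ} (ht : t ≠ 0) : 0 < Real.sinh t / t := by
  rcases lt_or_gt_of_ne ht with h | h
  · have h2 : Real.sinh t < 0 := by
      have := Real.sinh_pos_iff (x := -t) |>.2 (by linarith)
      rw [Real.sinh_neg] at this; linarith
    exact div_pos_of_neg_of_neg h2 h
  · exact div_pos (Real.sinh_pos_iff.2 h) h

lemma core' (q v : ℝ) (hq : 4 < q) (hv0 : v ≠ 0) (hv2 : |v| ≤ 1/(1+q)^2)
    (hm : (5+q^3)*|v| < (q^2-3*q-4)/6) :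
    (Real.sinh v / v) * Real.cosh v ^ (1+q) < Real.sinh (q*v) / (q*v) := by
  rcases lt_or_gt_of_ne hv0 with h | h
  · have habs : |v| = -v := abs_of_neg h
    rw [habs] at hv2 hm
    have hc := core q (-v) hq (by linarith) hv2 hm
    rw [Real.sinh_neg, Real.cosh_neg, show q*(-v) = -(q*v) by ring, Real.sinh_neg] at hc
    simpa [neg_div_neg_eq] using hc
  · have habs : |v| = v := abs_of_pos h
    rw [habs] at hv2 hm
    exact core q v hq h hv2 hm

theorem stmt8 (θ : ℝ) (hθ : 10 < θ) :
    ∃ δ > 0, ∀ x : ℝ, 0 < |x - 1| → |x - 1| < δ →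
      stolarskyMean θ x 1 < 2 * x / (x + 1) := by
  set q : ℝ := (θ-2)/2 with hqdef
  have hq : 4 < q := by rw [hqdef]; linarith
  have hq1 : (0:ℝ) < 1+q := by linarith
  have h5q : (0:ℝ) < 5+q^3 := by nlinarith [pow_pos (show (0:ℝ)<q by linarith) 3]
  have hmpos : 0 < (q^2-3*q-4)/6/(5+q^3) := by
    apply div_pos (by nlinarith) h5q
  refine ⟨min (1/2) (min (1/(1+q)^2) ((q^2-3*q-4)/6/(5+q^3))), by positivity, ?_⟩
  intro x hx1 hx2
  have hδ1 : |x-1| < 1/2 := lt_of_lt_of_le hx2 (min_le_left _ _)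
  have hδ2 : |x-1| ≤ 1/(1+q)^2 :=
    le_of_lt (lt_of_lt_of_le hx2 ((min_le_right _ _).trans (min_le_left _ _)))
  have hδ3 : |x-1| < (q^2-3*q-4)/6/(5+q^3) :=
    lt_of_lt_of_le hx2 ((min_le_right _ _).trans (min_le_right _ _))
  rw [abs_lt] at hδ1
  have hx0 : 0 < x := by linarith [hδ1.1]
  have hxne : x ≠ 1 := by
    intro h; rw [h] at hx1; simp at hx1
  set v : ℝ := Real.log x / 2 with hvdef
  have hu : Real.log x = 2*v := by rw [hvdef]; ring
  have hvne : v ≠ 0 := by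
    intro h
    apply hxne
    have h0 : Real.log x = 0 := by rw [hu, h]; ring
    rw [← Real.exp_log hx0, h0, Real.exp_zero]
  have hvabs : |v| ≤ |x-1| := by
    rcases le_or_gt 1 x with h | h
    · have h1 : 0 ≤ Real.log x := Real.log_nonneg h
      have h2 : Real.log x ≤ x - 1 := Real.log_le_sub_one_of_pos hx0
      rw [abs_of_nonneg (by rw [hvdef]; positivity), abs_of_nonneg (by linarith)]
      rw [hvdef]; linarith
    · have h1 : Real.log x < 0 := Real.log_neg hx0 h
      have h2 : Real.log x⁻¹ ≤ x⁻¹ - 1 := Real.log_le_sub_one_of_pos (by positivity)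
      rw [Real.log_inv] at h2
      have hx12 : 1/2 < x := by linarith [hδ1.2]
      have h3 : x⁻¹ - 1 ≤ 2*(1-x) := by
        rw [inv_eq_one_div, div_sub' (ne_of_gt hx0), div_le_iff₀ hx0]
        nlinarith
      rw [abs_of_neg (by rw [hvdef]; linarith), abs_of_neg (by linarith)]
      rw [hvdef]; linarith
  have hv2 : |v| ≤ 1/(1+q)^2 := le_trans hvabs hδ2
  have hm : (5+q^3)*|v| < (q^2-3*q-4)/6 := by
    have h6 : |v| < (q^2-3*q-4)/6/(5+q^3) := lt_of_le_of_lt hvabs hδ3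
    rw [lt_div_iff₀ h5q] at h6
    linarith [h6]
  have hKI := core' q v hq hvne hv2 hm
  have hSpos := sinh_div_pos hvne
  have hqvne : q*v ≠ 0 := mul_ne_zero (by linarith) hvne
  have hTpos := sinh_div_pos hqvne
  have hCpos : 0 < Real.cosh v ^ (1+q) := Real.rpow_pos_of_pos (Real.cosh_pos v) _
  have hxe : x = Real.exp (2*v) := by rw [← hu, Real.exp_log hx0]
  have hpq : (2-θ)/2 = -q := by rw [hqdef]; ring
  have hxp : x ^ ((2-θ)/2) = Real.exp (-(2*q*v)) := by
    rw [Real.rpow_def_of_pos hx0, hu, hpq]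
    congr 1; ring
  have h1 : Real.exp (2*v) - 1 = 2*Real.exp v*Real.sinh v := by
    rw [two_mul, Real.exp_add, Real.sinh_eq, Real.exp_neg]
    have h := Real.exp_ne_zero v
    field_simp
  have h3 : Real.exp (-(2*q*v)) - 1 = -(2*Real.exp (-(q*v))*Real.sinh (q*v)) := by
    rw [show -(2*q*v) = -(q*v) + -(q*v) by ring, Real.exp_add, Real.sinh_eq, Real.exp_neg]
    have h := Real.exp_ne_zero (q*v)
    field_simp
    ring
  have hsne : Real.sinh (q*v) ≠ 0 := Real.sinh_ne_zero.2 hqvne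
  have hsvne : Real.sinh v ≠ 0 := Real.sinh_ne_zero.2 hvne
  have hA_eq : ((2-θ)/2) * (x-1) / (x^((2-θ)/2) - 1^((2-θ)/2))
      = Real.exp ((1+q)*v) * ((Real.sinh v / v) / (Real.sinh (q*v)/(q*v))) := by
    rw [Real.one_rpow, hxp, hxe, h1, h3, hpq,
      show (1+q)*v = v + q*v by ring, Real.exp_add, Real.exp_neg]
    have he1 := Real.exp_ne_zero v
    have he2 := Real.exp_ne_zero (q*v)
    field_simp
  have hx2v : x = Real.exp v * Real.exp v := by
    rw [hxe, two_mul, Real.exp_add]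
  have hH : 2*x/(x+1) = Real.exp v / Real.cosh v := by
    rw [hx2v, Real.cosh_eq, Real.exp_neg]
    have h := Real.exp_ne_zero v
    field_simp
  have hHpos : 0 < Real.exp v / Real.cosh v := div_pos (Real.exp_pos v) (Real.cosh_pos v)
  have hstep : (Real.sinh v / v) / (Real.sinh (q*v)/(q*v)) < (Real.cosh v ^ (1+q))⁻¹ := by
    rw [inv_eq_one_div, div_lt_div_iff₀ hTpos hCpos, one_mul]
    exact hKI
  have hrw : (Real.exp v / Real.cosh v) ^ ((1:ℝ)+q)
      = Real.exp ((1+q)*v) * (Real.cosh v ^ ((1:ℝ)+q))⁻¹ := by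
    rw [Real.div_rpow (Real.exp_pos v).le (Real.cosh_pos v).le, ← Real.exp_mul,
      mul_comm v (1+q), div_eq_mul_inv]
  have hAH : Real.exp ((1+q)*v) * ((Real.sinh v / v) / (Real.sinh (q*v)/(q*v)))
      < (Real.exp v / Real.cosh v) ^ ((1:ℝ)+q) := by
    rw [hrw]
    exact mul_lt_mul_of_pos_left hstep (Real.exp_pos _)
  have hApos : 0 < Real.exp ((1+q)*v) * ((Real.sinh v / v) / (Real.sinh (q*v)/(q*v))) :=
    mul_pos (Real.exp_pos _) (div_pos hSpos hTpos)
  have hθ0 : (0:ℝ) < θ := by linarith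
  have hfinal := Real.rpow_lt_rpow hApos.le hAH (by positivity : (0:ℝ) < 2/θ)
  have hcollapse : ((Real.exp v / Real.cosh v) ^ ((1:ℝ)+q)) ^ ((2:ℝ)/θ)
      = Real.exp v / Real.cosh v := by
    rw [← Real.rpow_mul hHpos.le]
    have he : ((1:ℝ)+q)*(2/θ) = 1 := by
      rw [hqdef]; field_simp; ring
    rw [he, Real.rpow_one]
  rw [stolarskyMean, hA_eq, hH]
  calc (Real.exp ((1+q)*v) * ((Real.sinh v / v) / (Real.sinh (q*v)/(q*v)))) ^ ((2:ℝ)/θ)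
      < ((Real.exp v / Real.cosh v) ^ ((1:ℝ)+q)) ^ ((2:ℝ)/θ) := hfinal
    _ = Real.exp v / Real.cosh v := hcollapse
end

section
/- Let M⁽¹⁾, M⁽²⁾ be symmetric homogeneous means on (0,∞)², θ₁, θ₂ ∈ ℝ, and φ⁽ᵏ⁾(x,y) = M⁽ᵏ⁾(x,y)^{θₖ}. Then φ⁽¹⁾(x,y) ≤ φ⁽²⁾(x,y) for all x, y > 0 if and only if one of the following holds: θ₁ = θ₂ = 0; or θ₁ = θ₂ > 0 and M⁽¹⁾(x,1) ≤ M⁽²⁾(x,1) for all x > 0; or θ₁ = θ₂ < 0 and M⁽¹⁾(x,1) ≥ M⁽²⁾(x,1) for all x > 0. -/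
theorem stmt17 (M₁ M₂ : ℝ → ℝ → ℝ) (θ₁ θ₂ : ℝ)
    (hsym₁ : ∀ x y, 0 < x → 0 < y → M₁ x y = M₁ y x)
    (hsym₂ : ∀ x y, 0 < x → 0 < y → M₂ x y = M₂ y x)
    (hhom₁ : ∀ a x y, 0 < a → 0 < x → 0 < y → M₁ (a * x) (a * y) = a * M₁ x y)
    (hhom₂ : ∀ a x y, 0 < a → 0 < x → 0 < y → M₂ (a * x) (a * y) = a * M₂ x y)
    (hmono₁ : ∀ x x' y y', 0 < x → x ≤ x' → 0 < y → y ≤ y' → M₁ x y ≤ M₁ x' y')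
    (hmono₂ : ∀ x x' y y', 0 < x → x ≤ x' → 0 < y → y ≤ y' → M₂ x y ≤ M₂ x' y')
    (hmean₁ : ∀ x y, 0 < x → 0 < y → min x y ≤ M₁ x y ∧ M₁ x y ≤ max x y)
    (hmean₂ : ∀ x y, 0 < x → 0 < y → min x y ≤ M₂ x y ∧ M₂ x y ≤ max x y) :
    (∀ x y, 0 < x → 0 < y → (M₁ x y) ^ θ₁ ≤ (M₂ x y) ^ θ₂) ↔
      ((θ₁ = 0 ∧ θ₂ = 0) ∨
       (θ₁ = θ₂ ∧ 0 < θ₁ ∧ ∀ x, 0 < x → M₁ x 1 ≤ M₂ x 1) ∨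
       (θ₁ = θ₂ ∧ θ₁ < 0 ∧ ∀ x, 0 < x → M₂ x 1 ≤ M₁ x 1)) := by
  have pos₁ : ∀ x y, 0 < x → 0 < y → 0 < M₁ x y := fun x y hx hy =>
    lt_of_lt_of_le (lt_min hx hy) (hmean₁ x y hx hy).1
  have pos₂ : ∀ x y, 0 < x → 0 < y → 0 < M₂ x y := fun x y hx hy =>
    lt_of_lt_of_le (lt_min hx hy) (hmean₂ x y hx hy).1
  have diag₁ : ∀ t : ℝ, 0 < t → M₁ t t = t := fun t ht =>
    le_antisymm (by simpa using (hmean₁ t t ht ht).2) (by simpa using (hmean₁ t t ht ht).1)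
  have diag₂ : ∀ t : ℝ, 0 < t → M₂ t t = t := fun t ht =>
    le_antisymm (by simpa using (hmean₂ t t ht ht).2) (by simpa using (hmean₂ t t ht ht).1)
  have hscale₁ : ∀ x y : ℝ, 0 < x → 0 < y → M₁ x y = y * M₁ (x / y) 1 := by
    intro x y hx hy
    have := hhom₁ y (x / y) 1 hy (div_pos hx hy) one_pos
    rw [mul_one, mul_div_cancel₀ x hy.ne'] at this
    exact this
  have hscale₂ : ∀ x y : ℝ, 0 < x → 0 < y → M₂ x y = y * M₂ (x / y) 1 := by
    intro x y hx hy
    have := hhom₂ y (x / y) 1 hy (div_pos hx hy) one_pos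
    rw [mul_one, mul_div_cancel₀ x hy.ne'] at this
    exact this
  constructor
  · intro h
    have hθ : θ₁ = θ₂ := by
      have h2 := h 2 2 two_pos two_pos
      rw [diag₁ 2 two_pos, diag₂ 2 two_pos] at h2
      have hhalf := h (1/2) (1/2) (by norm_num) (by norm_num)
      rw [diag₁ (1/2) (by norm_num), diag₂ (1/2) (by norm_num)] at hhalf
      have h1 : θ₁ ≤ θ₂ := (Real.rpow_le_rpow_left_iff one_lt_two).mp h2
      have h2' : θ₂ ≤ θ₁ :=
        (Real.rpow_le_rpow_left_iff_of_base_lt_one (by norm_num) (by norm_num)).mp hhalf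
      linarith
    rcases lt_trichotomy θ₁ 0 with hneg | hzero | hpos
    · refine Or.inr (Or.inr ⟨hθ, hneg, fun x hx => ?_⟩)
      by_contra hc
      push_neg at hc
      have := Real.rpow_lt_rpow_of_neg (pos₁ x 1 hx one_pos) hc hneg
      have h' := h x 1 hx one_pos
      rw [← hθ] at h'
      linarith
    · exact Or.inl ⟨hzero, hθ ▸ hzero⟩
    · refine Or.inr (Or.inl ⟨hθ, hpos, fun x hx => ?_⟩)
      by_contra hc
      push_neg at hc
      have := Real.rpow_lt_rpow (pos₂ x 1 hx one_pos).le hc hpos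
      have h' := h x 1 hx one_pos
      rw [← hθ] at h'
      linarith
  · rintro (⟨h1, h2⟩ | ⟨heq, hpos, hM⟩ | ⟨heq, hneg, hM⟩) <;> intro x y hx hy
    · simp [h1, h2]
    · have hle : M₁ x y ≤ M₂ x y := by
        rw [hscale₁ x y hx hy, hscale₂ x y hx hy]
        exact mul_le_mul_of_nonneg_left (hM (x / y) (div_pos hx hy)) hy.le
      rw [← heq]
      exact Real.rpow_le_rpow (pos₁ x y hx hy).le hle hpos.le
    · have hle : M₂ x y ≤ M₁ x y := by
        rw [hscale₁ x y hx hy, hscale₂ x y hx hy]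
        exact mul_le_mul_of_nonneg_left (hM (x / y) (div_pos hx hy)) hy.le
      rw [← heq]
      exact Real.rpow_le_rpow_of_nonpos (pos₂ x y hx hy) hle hneg.le
end
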